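/- arXiv:2408.15863 — 2 statements merged into one kernel-verified Lean document; each statement's English description precedes it below -/
import Mathlib

section
/- Let T = {(x,y) ∈ ℝ² : x ≥ 0, y ≥ 0, x + y ≤ 1} be the standard reference triangle and let b(x,y) = 27·x·y·(1 − x − y) be the reference element bubble function. For every natural number m there exists a constant C > 0 such that for every real polynomial p in two variables of total degree at most m, both ∫_T p(x,y)² dx dy ≤ C · ∫_T (b(x,y)·p(x,y))² dx dy and ∫_T (b(x,y)²·p(x,y))² dx dy ≤ C · ∫_T p(x,y)² dx dy hold. -/
/-!
On the finite-dimensional space of polynomials of degree `≤ m`, the quadratic form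
`p ↦ ∫_T (b p)²` is positive definite: `b > 0` in the interior of `T`, and a polynomial vanishing
on an open set is zero by the identity theorem. Comparing two continuous quadratic forms on the
compact unit sphere of a coefficient space gives the first inequality. The second holds pointwise,
because `0 ≤ b ≤ 1` on `T`.
-/

open MeasureTheory Real

/-- The standard reference triangle `T = {(x,y) : x ≥ 0, y ≥ 0, x + y ≤ 1}` in ℝ². -/
def T : Set (EuclideanSpace ℝ (Fin 2)) := {x | 0 ≤ x 0 ∧ 0 ≤ x 1 ∧ x 0 + x 1 ≤ 1}

/-- The reference element bubble function `b(x,y) = 27·x·y·(1 − x − y)`. -/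
noncomputable def bub (x : EuclideanSpace ℝ (Fin 2)) : ℝ :=
  27 * x 0 * x 1 * (1 - x 0 - x 1)

open Set Filter Topology MvPolynomial

theorem exists_le_mul_of_continuous_of_sq_homogeneous {E : Type*} [NormedAddCommGroup E]
    [NormedSpace ℝ E] [ProperSpace E] {f g : E → ℝ} (hf : Continuous f) (hg : Continuous g)
    (hf_smul : ∀ (r : ℝ) x, f (r • x) = r ^ 2 * f x)
    (hg_smul : ∀ (r : ℝ) x, g (r • x) = r ^ 2 * g x) (hg_pos : ∀ x ≠ 0, 0 < g x) :
    ∃ C, ∀ x, f x ≤ C * g x := by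
  have hS : ∀ x ∈ Metric.sphere (0 : E) 1, x ≠ 0 := by
    rintro x hx rfl
    simp at hx
  obtain ⟨C, hC⟩ := (isCompact_sphere (0 : E) 1).bddAbove_image
    (hf.continuousOn.div hg.continuousOn fun x hx => (hg_pos x (hS x hx)).ne')
  refine ⟨C, fun x => ?_⟩
  rcases eq_or_ne x 0 with rfl | hx
  · have hf0 : f 0 = 0 := by simpa using hf_smul 0 0
    have hg0 : g 0 = 0 := by simpa using hg_smul 0 0
    simp [hf0, hg0]
  set u := ‖x‖⁻¹ • x
  have hu : u ∈ Metric.sphere (0 : E) 1 := by simp [u, norm_smul, hx]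
  have hfu : f u ≤ C * g u := (div_le_iff₀ (hg_pos u (hS u hu))).1 (hC ⟨u, hu, rfl⟩)
  have hxu : x = ‖x‖ • u := (smul_inv_smul₀ (norm_ne_zero_iff.2 hx) x).symm
  rw [hxu, hf_smul, hg_smul, mul_left_comm]
  exact mul_le_mul_of_nonneg_left hfu (sq_nonneg _)

theorem setIntegral_sq_mul_le {X : Type*} [MeasurableSpace X] {μ : Measure X} {s : Set X}
    (hs : MeasurableSet s) {w f : X → ℝ} (hf : IntegrableOn (fun x => f x ^ 2) s μ)
    (hw : ∀ x ∈ s, |w x| ≤ 1) :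
    ∫ x in s, (w x * f x) ^ 2 ∂μ ≤ ∫ x in s, f x ^ 2 ∂μ := by
  refine integral_mono_of_nonneg (ae_of_all _ fun _ => sq_nonneg _) hf
    ((ae_restrict_iff' hs).2 (ae_of_all _ fun x hx => ?_))
  dsimp only
  rw [mul_pow]
  exact mul_le_of_le_one_left (sq_nonneg _) ((sq_le_one_iff_abs_le_one _).2 (hw x hx))

namespace MvPolynomial

variable {σ : Type*}

theorem continuous_eval_ofLp [Fintype σ] (p : MvPolynomial σ ℝ) :
    Continuous fun x : EuclideanSpace ℝ σ => eval (fun i => x i) p :=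
  (continuous_eval p).comp (PiLp.continuous_ofLp 2 _)

theorem eq_zero_of_eval_eq_zero_on_isOpen [Fintype σ] {p : MvPolynomial σ ℝ}
    {U : Set (EuclideanSpace ℝ σ)} (hU : IsOpen U) (hne : U.Nonempty)
    (h : ∀ x ∈ U, eval (fun i => x i) p = 0) : p = 0 := by
  obtain ⟨a, ha⟩ := hne
  have han := AnalyticOnNhd.eval_linearMap (WithLp.linearEquiv 2 ℝ (σ → ℝ)).toLinearMap p
  have hzero := han.eqOn_zero_of_preconnected_of_eventuallyEq_zero isPreconnected_univ
    (mem_univ a) (eventually_of_mem (hU.mem_nhds ha) h)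
  exact MvPolynomial.funext fun y => by simpa using hzero (mem_univ (WithLp.toLp 2 y))

variable [Fintype σ] [DecidableEq σ]

/- Coefficient vectors indexed by the box `d ≤ (m, …, m)` form a finite-dimensional normed space
parametrizing all polynomials of total degree `≤ m`. -/
variable (σ) in
noncomputable abbrev boxExponents (m : ℕ) : Finset (σ →₀ ℕ) :=
  Finset.Iic (Finsupp.equivFunOnFinite.symm fun _ => m)

noncomputable def ofBoxCoeffs (m : ℕ) : (boxExponents σ m → ℝ) →ₗ[ℝ] MvPolynomial σ ℝ :=
  Fintype.linearCombination ℝ fun d => monomial (d : σ →₀ ℕ) 1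

theorem ofBoxCoeffs_injective (m : ℕ) : Function.Injective (ofBoxCoeffs (σ := σ) m) := by
  have hli := (basisMonomials σ ℝ).linearIndependent.comp
    (Subtype.val : boxExponents σ m → σ →₀ ℕ) Subtype.val_injective
  rw [coe_basisMonomials] at hli
  exact hli.fintypeLinearCombination_injective

theorem ofBoxCoeffs_coeff {m : ℕ} {p : MvPolynomial σ ℝ} (hp : p.totalDegree ≤ m) :
    ofBoxCoeffs m (fun d => p.coeff d) = p := by
  have hsupp : p.support ⊆ boxExponents σ m := fun d hd => by
    simp only [Finset.mem_Iic, Finsupp.le_def]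
    intro i
    simpa using (Finsupp.le_degree i d).trans ((le_totalDegree hd).trans hp)
  rw [ofBoxCoeffs, Fintype.linearCombination_apply,
    Finset.sum_coe_sort (boxExponents σ m) fun d => p.coeff d • monomial d (1 : ℝ)]
  simp_rw [smul_monomial, smul_eq_mul, mul_one]
  conv_rhs => rw [p.as_sum]
  refine (Finset.sum_subset hsupp fun d _ hd => ?_).symm
  simp [notMem_support_iff.1 hd]

theorem continuous_eval_ofBoxCoeffs (m : ℕ) :
    Continuous fun cx : (boxExponents σ m → ℝ) × EuclideanSpace ℝ σ =>
      eval (fun i => cx.2 i) (ofBoxCoeffs m cx.1) := by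
  simp only [ofBoxCoeffs, Fintype.linearCombination_apply, map_sum, smul_eval]
  exact continuous_finsetSum _ fun d _ => ((continuous_apply d).comp continuous_fst).mul
    ((continuous_eval_ofLp _).comp continuous_snd)

end MvPolynomial

section WeightedSqIntegral

variable {σ : Type*} [Fintype σ] {K U : Set (EuclideanSpace ℝ σ)} {w : EuclideanSpace ℝ σ → ℝ}

noncomputable def weightedSqIntegral (K : Set (EuclideanSpace ℝ σ)) (w : EuclideanSpace ℝ σ → ℝ)
    (p : MvPolynomial σ ℝ) : ℝ :=
  ∫ x in K, (w x * eval (fun i => x i) p) ^ 2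

theorem weightedSqIntegral_smul (r : ℝ) (p : MvPolynomial σ ℝ) :
    weightedSqIntegral K w (r • p) = r ^ 2 * weightedSqIntegral K w p := by
  rw [weightedSqIntegral, weightedSqIntegral, ← integral_const_mul]
  simp only [smul_eval]
  congr 1 with x
  ring

theorem continuous_weightedSqIntegral_ofBoxCoeffs [DecidableEq σ] (hK : IsCompact K)
    (hw : Continuous w) (m : ℕ) :
    Continuous fun c => weightedSqIntegral K w (ofBoxCoeffs m c) :=
  continuous_parametric_integral_of_continuous
    (((hw.comp continuous_snd).mul (continuous_eval_ofBoxCoeffs m)).pow 2) hK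

theorem weightedSqIntegral_pos (hK : IsCompact K) (hU : IsOpen U) (hUne : U.Nonempty)
    (hUK : U ⊆ K) (hw : Continuous w) (hwU : ∀ x ∈ U, w x ≠ 0) {p : MvPolynomial σ ℝ}
    (hp : p ≠ 0) : 0 < weightedSqIntegral K w p := by
  obtain ⟨a, haU, hpa⟩ : ∃ a ∈ U, eval (fun i => a i) p ≠ 0 := by
    by_contra! h
    exact hp (eq_zero_of_eval_eq_zero_on_isOpen hU hUne h)
  have hcont : Continuous fun x : EuclideanSpace ℝ σ => (w x * eval (fun i => x i) p) ^ 2 :=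
    (hw.mul (continuous_eval_ofLp p)).pow 2
  rw [weightedSqIntegral, setIntegral_pos_iff_support_of_nonneg_ae
    (ae_of_all _ fun _ => sq_nonneg _) (hcont.continuousOn.integrableOn_compact hK)]
  calc 0 < volume (Function.support _ ∩ U) :=
        (hcont.isOpen_support.inter hU).measure_pos volume
          ⟨a, pow_ne_zero 2 (mul_ne_zero (hwU a haU) hpa), haU⟩
    _ ≤ _ := measure_mono (inter_subset_inter_right _ hUK)

theorem exists_integral_sq_le_mul_weightedSqIntegral (hK : IsCompact K) (hU : IsOpen U)
    (hUne : U.Nonempty) (hUK : U ⊆ K) (hw : Continuous w) (hwU : ∀ x ∈ U, w x ≠ 0) (m : ℕ) :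
    ∃ C, ∀ p : MvPolynomial σ ℝ, p.totalDegree ≤ m →
      ∫ x in K, (eval (fun i => x i) p) ^ 2 ≤ C * weightedSqIntegral K w p := by
  classical
  obtain ⟨C, hC⟩ := exists_le_mul_of_continuous_of_sq_homogeneous
    (continuous_weightedSqIntegral_ofBoxCoeffs (w := fun _ => 1) hK continuous_const m)
    (continuous_weightedSqIntegral_ofBoxCoeffs hK hw m)
    (fun r c => by rw [map_smul, weightedSqIntegral_smul])
    (fun r c => by rw [map_smul, weightedSqIntegral_smul])
    (fun c hc => weightedSqIntegral_pos hK hU hUne hUK hw hwU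
      ((map_ne_zero_iff _ (ofBoxCoeffs_injective m)).2 hc))
  refine ⟨C, fun p hp => ?_⟩
  simpa [weightedSqIntegral, ofBoxCoeffs_coeff hp] using hC fun d => p.coeff d

end WeightedSqIntegral

theorem continuous_bub : Continuous bub := by
  unfold bub
  fun_prop

theorem isClosed_T : IsClosed T := by
  simp only [T, Set.ofPred_and]
  exact (isClosed_le (by fun_prop) (by fun_prop)).inter <|
    (isClosed_le (by fun_prop) (by fun_prop)).inter (isClosed_le (by fun_prop) (by fun_prop))

theorem isCompact_T : IsCompact T := by
  refine Metric.isCompact_of_isClosed_isBounded isClosed_T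
    (isBounded_iff_forall_norm_le.2 ⟨1, fun x ⟨h0, h1, h01⟩ => ?_⟩)
  rw [EuclideanSpace.norm_eq, Fin.sum_univ_two, Real.sqrt_le_one, Real.norm_eq_abs,
    Real.norm_eq_abs, sq_abs, sq_abs]
  nlinarith

def openTriangle : Set (EuclideanSpace ℝ (Fin 2)) := {x | 0 < x 0 ∧ 0 < x 1 ∧ x 0 + x 1 < 1}

theorem isOpen_openTriangle : IsOpen openTriangle := by
  simp only [openTriangle, Set.ofPred_and]
  exact (isOpen_lt (by fun_prop) (by fun_prop)).inter <|
    (isOpen_lt (by fun_prop) (by fun_prop)).inter (isOpen_lt (by fun_prop) (by fun_prop))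

theorem openTriangle_nonempty : openTriangle.Nonempty :=
  ⟨WithLp.toLp 2 ![1 / 3, 1 / 3], by norm_num [openTriangle]⟩

theorem openTriangle_subset_T : openTriangle ⊆ T :=
  fun _ ⟨h0, h1, h01⟩ => ⟨h0.le, h1.le, h01.le⟩

theorem bub_pos_of_mem_openTriangle {x : EuclideanSpace ℝ (Fin 2)} (hx : x ∈ openTriangle) :
    0 < bub x := by
  obtain ⟨h0, h1, h01⟩ := hx
  have : 0 < 1 - x 0 - x 1 := by linarith
  unfold bub
  positivity

theorem abs_bub_sq_le_one {x : EuclideanSpace ℝ (Fin 2)} (hx : x ∈ T) : |bub x ^ 2| ≤ 1 := by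
  obtain ⟨h0, h1, h01⟩ := hx
  have hb0 : 0 ≤ bub x := by
    have : 0 ≤ 1 - x 0 - x 1 := by linarith
    unfold bub
    positivity
  -- AM-GM for `x 0`, `x 1` and `1 - x 0 - x 1`
  have hb1 : bub x ≤ 1 := by
    unfold bub
    nlinarith [sq_nonneg (x 0 - x 1), sq_nonneg (x 0 + x 1 - 2 / 3), mul_nonneg h0 h1]
  rw [abs_of_nonneg (sq_nonneg _)]
  exact pow_le_one₀ hb0 hb1

/-- Bubble-function norm equivalence on the reference triangle: for every `m` there is
`C > 0` such that for all polynomials `p` of total degree at most `m`,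
`‖p‖²_{L²(T)} ≤ C ‖b p‖²_{L²(T)}` and `‖b² p‖²_{L²(T)} ≤ C ‖p‖²_{L²(T)}`. -/
theorem bubble_norm_equivalence (m : ℕ) :
    ∃ C > 0, ∀ p : MvPolynomial (Fin 2) ℝ, p.totalDegree ≤ m →
      ((∫ x in T, (MvPolynomial.eval (fun i => x i) p) ^ 2) ≤
        C * ∫ x in T, (bub x * MvPolynomial.eval (fun i => x i) p) ^ 2) ∧
      ((∫ x in T, ((bub x) ^ 2 * MvPolynomial.eval (fun i => x i) p) ^ 2) ≤
        C * ∫ x in T, (MvPolynomial.eval (fun i => x i) p) ^ 2) := by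
  obtain ⟨C, hC⟩ := exists_integral_sq_le_mul_weightedSqIntegral isCompact_T isOpen_openTriangle
    openTriangle_nonempty openTriangle_subset_T continuous_bub
    (fun x hx => (bub_pos_of_mem_openTriangle hx).ne') m
  refine ⟨max C 1, by positivity, fun p hp => ⟨?_, ?_⟩⟩
  · calc _ ≤ C * weightedSqIntegral T bub p := hC p hp
      _ ≤ _ := mul_le_mul_of_nonneg_right (le_max_left _ _) (integral_nonneg fun _ => sq_nonneg _)
  · calc _ ≤ ∫ x in T, (MvPolynomial.eval (fun i => x i) p) ^ 2 :=
          setIntegral_sq_mul_le isClosed_T.measurableSet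
            (((continuous_eval_ofLp p).pow 2).continuousOn.integrableOn_compact isCompact_T)
            fun x hx => abs_bub_sq_le_one hx
      _ ≤ _ := le_mul_of_one_le_left (integral_nonneg fun _ => sq_nonneg _) (le_max_right _ _)
end

section
/- For all natural numbers m and k there exists a constant C > 0 such that for every t₀ ∈ [−1,1] and every real polynomial p in one variable of degree at most m, ∫_{−1}^{1} p(t)² dt ≤ C · ∫_{−1}^{1} (t − t₀)⁴ · (1 − t²)^k · p(t)² dt, with C independent of t₀. -/
open MeasureTheory Real

namespace BubbleAux

noncomputable def Q (w : ℝ → ℝ) (n : ℕ) (x : EuclideanSpace ℝ (Fin (n+1))) : ℝ :=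
  ∫ t in Set.Icc (-1:ℝ) 1, w t * (∑ i : Fin (n+1), x i * t ^ (i : ℕ)) ^ 2

lemma Q_eq_sum (w : ℝ → ℝ) (hw : Continuous w) (n : ℕ) (x : EuclideanSpace ℝ (Fin (n+1))) :
    Q w n x = ∑ i : Fin (n+1), ∑ j : Fin (n+1),
      x i * x j * ∫ t in Set.Icc (-1:ℝ) 1, w t * t ^ ((i : ℕ) + (j : ℕ)) := by
  have hpt : ∀ t : ℝ, w t * (∑ i : Fin (n+1), x i * t ^ (i : ℕ)) ^ 2 =
      ∑ i : Fin (n+1), ∑ j : Fin (n+1), x i * x j * (w t * t ^ ((i : ℕ) + (j : ℕ))) := by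
    intro t
    rw [sq, Finset.sum_mul_sum, Finset.mul_sum]
    refine Finset.sum_congr rfl fun i _ => ?_
    rw [Finset.mul_sum]
    refine Finset.sum_congr rfl fun j _ => ?_
    rw [pow_add]; ring
  unfold Q
  simp only [hpt]
  rw [integral_finset_sum]
  · refine Finset.sum_congr rfl fun i _ => ?_
    rw [integral_finset_sum]
    · refine Finset.sum_congr rfl fun j _ => ?_
      exact integral_const_mul _ _
    · intro j _
      exact ((continuous_const.mul (hw.mul (continuous_pow _))).integrableOn_Icc)
  · intro i _
    apply MeasureTheory.integrable_finset_sum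
    intro j _
    exact ((continuous_const.mul (hw.mul (continuous_pow _))).integrableOn_Icc)

lemma Q_continuous (w : ℝ → ℝ) (hw : Continuous w) (n : ℕ) :
    Continuous (Q w n) := by
  have : Q w n = fun x => ∑ i : Fin (n+1), ∑ j : Fin (n+1),
      x i * x j * ∫ t in Set.Icc (-1:ℝ) 1, w t * t ^ ((i : ℕ) + (j : ℕ)) := by
    funext x; exact Q_eq_sum w hw n x
  rw [this]
  refine continuous_finset_sum _ fun i _ => continuous_finset_sum _ fun j _ => ?_
  exact (((EuclideanSpace.proj i).continuous).mul ((EuclideanSpace.proj j).continuous)).mul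
    continuous_const

lemma Q_smul (w : ℝ → ℝ) (n : ℕ) (r : ℝ) (x : EuclideanSpace ℝ (Fin (n+1))) :
    Q w n (r • x) = r ^ 2 * Q w n x := by
  unfold Q
  rw [← integral_const_mul]
  refine integral_congr_ae (Filter.Eventually.of_forall fun t => ?_)
  have : ∀ i : Fin (n+1), (r • x) i = r * x i := fun i => rfl
  simp only [this]
  have : (∑ i : Fin (n+1), r * x i * t ^ (i : ℕ)) =
      r * ∑ i : Fin (n+1), x i * t ^ (i : ℕ) := by
    rw [Finset.mul_sum]; exact Finset.sum_congr rfl fun i _ => by ring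
  rw [this]; ring

lemma Q_nonneg (w : ℝ → ℝ) (hwnn : ∀ t ∈ Set.Icc (-1:ℝ) 1, 0 ≤ w t) (n : ℕ)
    (x : EuclideanSpace ℝ (Fin (n+1))) : 0 ≤ Q w n x := by
  refine setIntegral_nonneg measurableSet_Icc fun t ht => ?_
  exact mul_nonneg (hwnn t ht) (sq_nonneg _)

lemma Q_pos (w : ℝ → ℝ) (hw : Continuous w) (a b : ℝ) (hab : a < b)
    (ha : (-1:ℝ) ≤ a) (hb : b ≤ 1)
    (hwpos : ∀ t ∈ Set.Ioo a b, 0 < w t)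
    (hwnn : ∀ t ∈ Set.Icc (-1:ℝ) 1, 0 ≤ w t) (n : ℕ)
    (x : EuclideanSpace ℝ (Fin (n+1))) (hx : x ≠ 0) : 0 < Q w n x := by
  classical
  set p : Polynomial ℝ := ∑ i : Fin (n+1), Polynomial.C (x i) * Polynomial.X ^ (i : ℕ) with hp
  have heval : ∀ t : ℝ, Polynomial.eval t p = ∑ i : Fin (n+1), x i * t ^ (i : ℕ) := by
    intro t; simp [hp, Polynomial.eval_finset_sum]
  have hcoeff : ∀ i : Fin (n+1), p.coeff (i : ℕ) = x i := by
    intro i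
    rw [hp, Polynomial.finset_sum_coeff]
    rw [Finset.sum_eq_single i]
    · simp
    · intro j _ hji
      rw [Polynomial.coeff_C_mul, Polynomial.coeff_X_pow, if_neg, mul_zero]
      exact fun h => hji (Fin.ext h.symm)
    · simp
  have hpne : p ≠ 0 := by
    intro h0
    apply hx
    ext i
    have := hcoeff i
    rw [h0] at this
    simpa using this.symm
  have hroots : Set.Finite {t : ℝ | p.IsRoot t} := Polynomial.finite_setOf_isRoot hpne
  set f : ℝ → ℝ := fun t => w t * (∑ i : Fin (n+1), x i * t ^ (i : ℕ)) ^ 2 with hf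
  have hfc : Continuous f := hw.mul ((continuous_finset_sum _ fun i _ =>
    continuous_const.mul (continuous_pow _)).pow 2)
  have hfi : IntegrableOn f (Set.Icc (-1:ℝ) 1) := hfc.integrableOn_Icc
  have hfnn : 0 ≤ᵐ[volume.restrict (Set.Icc (-1:ℝ) 1)] f := by
    refine ae_restrict_of_forall_mem measurableSet_Icc fun t ht => ?_
    exact mul_nonneg (hwnn t ht) (sq_nonneg _)
  rw [show Q w n x = ∫ t in Set.Icc (-1:ℝ) 1, f t from rfl]
  rw [setIntegral_pos_iff_support_of_nonneg_ae hfnn hfi]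
  have hsub : Set.Ioo a b \ {t : ℝ | p.IsRoot t} ⊆
      Function.support f ∩ Set.Icc (-1:ℝ) 1 := by
    rintro t ⟨htab, htr⟩
    have htIcc : t ∈ Set.Icc (-1:ℝ) 1 :=
      ⟨le_trans ha htab.1.le, le_trans htab.2.le hb⟩
    refine ⟨?_, htIcc⟩
    have hev : Polynomial.eval t p ≠ 0 := htr
    rw [heval t] at hev
    have : f t = w t * (∑ i : Fin (n+1), x i * t ^ (i : ℕ)) ^ 2 := rfl
    simp only [Function.mem_support, this]
    exact mul_ne_zero (hwpos t htab).ne' (pow_ne_zero 2 hev)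
  have hroots0 : volume {t : ℝ | p.IsRoot t} = 0 := hroots.measure_zero volume
  calc (0 : ENNReal) < ENNReal.ofReal (b - a) := by
        simp [ENNReal.ofReal_pos, sub_pos.mpr hab]
    _ = volume (Set.Ioo a b) := (Real.volume_Ioo).symm
    _ = volume (Set.Ioo a b \ {t : ℝ | p.IsRoot t}) := (measure_diff_null hroots0).symm
    _ ≤ volume (Function.support f ∩ Set.Icc (-1:ℝ) 1) := measure_mono hsub

lemma key (n : ℕ) (w : ℝ → ℝ) (hw : Continuous w) (a b : ℝ) (hab : a < b)
    (ha : (-1:ℝ) ≤ a) (hb : b ≤ 1)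
    (hwpos : ∀ t ∈ Set.Ioo a b, 0 < w t)
    (hwnn : ∀ t ∈ Set.Icc (-1:ℝ) 1, 0 ≤ w t) :
    ∃ c > 0, ∀ p : Polynomial ℝ, p.natDegree ≤ n →
      (∫ t in Set.Icc (-1:ℝ) 1, (Polynomial.eval t p) ^ 2) ≤
        c * ∫ t in Set.Icc (-1:ℝ) 1, w t * (Polynomial.eval t p) ^ 2 := by
  classical
  set one : ℝ → ℝ := fun _ => 1 with hone
  have hone_c : Continuous one := continuous_const
  have hone_pos : ∀ t ∈ Set.Ioo a b, 0 < one t := fun _ _ => one_pos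
  have hone_nn : ∀ t ∈ Set.Icc (-1:ℝ) 1, 0 ≤ one t := fun _ _ => zero_le_one
  set S : Set (EuclideanSpace ℝ (Fin (n+1))) := Metric.sphere 0 1 with hS
  have hScomp : IsCompact S := isCompact_sphere 0 1
  have hSne : S.Nonempty := NormedSpace.sphere_nonempty.mpr zero_le_one
  obtain ⟨xmin, hxminS, hxmin⟩ := hScomp.exists_isMinOn hSne (Q_continuous w hw n).continuousOn
  obtain ⟨xmax, hxmaxS, hxmax⟩ := hScomp.exists_isMaxOn hSne (Q_continuous one hone_c n).continuousOn
  have hxmin_ne : xmin ≠ 0 := by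
    intro h; rw [h] at hxminS
    simpa [hS] using hxminS
  have hxmax_ne : xmax ≠ 0 := by
    intro h; rw [h] at hxmaxS
    simpa [hS] using hxmaxS
  have hQmin_pos : 0 < Q w n xmin := Q_pos w hw a b hab ha hb hwpos hwnn n xmin hxmin_ne
  have hQmax_pos : 0 < Q one n xmax :=
    Q_pos one hone_c a b hab ha hb hone_pos hone_nn n xmax hxmax_ne
  set c : ℝ := Q one n xmax / Q w n xmin with hc
  have hcpos : 0 < c := div_pos hQmax_pos hQmin_pos
  refine ⟨c, hcpos, fun p hdeg => ?_⟩
  set x : EuclideanSpace ℝ (Fin (n+1)) := (WithLp.equiv 2 _).symm fun i => p.coeff (i : ℕ) with hx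
  have hxi : ∀ i : Fin (n+1), x i = p.coeff (i : ℕ) := fun i => rfl
  have heval : ∀ t : ℝ, Polynomial.eval t p = ∑ i : Fin (n+1), x i * t ^ (i : ℕ) := by
    intro t
    rw [Polynomial.eval_eq_sum_range' (Nat.lt_succ_of_le hdeg) t]
    rw [← Fin.sum_univ_eq_sum_range (fun i => p.coeff i * t ^ i) (n+1)]
    exact Finset.sum_congr rfl fun i _ => by rw [hxi i]
  have hL : (∫ t in Set.Icc (-1:ℝ) 1, (Polynomial.eval t p) ^ 2) = Q one n x := by
    unfold Q
    refine setIntegral_congr_fun measurableSet_Icc fun t _ => ?_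
    rw [heval t]; simp [hone]
  have hR : (∫ t in Set.Icc (-1:ℝ) 1, w t * (Polynomial.eval t p) ^ 2) = Q w n x := by
    unfold Q
    refine setIntegral_congr_fun measurableSet_Icc fun t _ => ?_
    rw [heval t]
  rw [hL, hR]
  by_cases hx0 : x = 0
  · rw [hx0]
    have h1 : Q one n (0 : EuclideanSpace ℝ (Fin (n+1))) = 0 := by
      have := Q_smul one n 0 (0 : EuclideanSpace ℝ (Fin (n+1)))
      simpa using this
    have h2 : 0 ≤ Q w n (0 : EuclideanSpace ℝ (Fin (n+1))) := Q_nonneg w hwnn n 0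
    rw [h1]
    exact mul_nonneg hcpos.le h2
  · set y : EuclideanSpace ℝ (Fin (n+1)) := ‖x‖⁻¹ • x with hy
    have hyS : y ∈ S := by
      simp only [hS, Metric.mem_sphere, dist_zero_right]
      exact norm_smul_inv_norm (𝕜 := ℝ) hx0
    have hxy : x = ‖x‖ • y := by
      rw [hy, smul_smul, mul_inv_cancel₀ (norm_ne_zero_iff.mpr hx0), one_smul]
    have hsphere : Q one n y ≤ c * Q w n y := by
      calc Q one n y ≤ Q one n xmax := hxmax hyS
        _ = c * Q w n xmin := by rw [hc, div_mul_cancel₀ _ hQmin_pos.ne']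
        _ ≤ c * Q w n y := by
            exact mul_le_mul_of_nonneg_left (hxmin hyS) hcpos.le
    have e1 : Q one n x = ‖x‖ ^ 2 * Q one n y := by
      nth_rewrite 1 [hxy]; rw [Q_smul]
    have e2 : Q w n x = ‖x‖ ^ 2 * Q w n y := by
      nth_rewrite 1 [hxy]; rw [Q_smul]
    rw [e1, e2]
    refine le_trans (mul_le_mul_of_nonneg_left hsphere (sq_nonneg _)) (le_of_eq (by ring))

end BubbleAux

/-- One-dimensional bubble norm equivalence with a quartic factor vanishing at a point
`t₀` of the closed edge: for all `m, k` there is `C > 0`, independent of `t₀ ∈ [−1,1]`,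
such that for every polynomial `p` of degree at most `m`,
`∫₋₁¹ p(t)² dt ≤ C ∫₋₁¹ (t − t₀)⁴ (1 − t²)ᵏ p(t)² dt`. -/
theorem one_dimensional_modified_bubble_norm_equivalence (m k : ℕ) :
    ∃ C > 0, ∀ t₀ ∈ Set.Icc (-1:ℝ) 1, ∀ p : Polynomial ℝ, p.natDegree ≤ m →
      (∫ t in Set.Icc (-1:ℝ) 1, (Polynomial.eval t p) ^ 2) ≤
        C * ∫ t in Set.Icc (-1:ℝ) 1,
          (t - t₀) ^ 4 * (1 - t ^ 2) ^ k * (Polynomial.eval t p) ^ 2 := by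
  classical
  set wp : ℝ → ℝ := fun t => (max t 0) ^ 4 * (1 - t ^ 2) ^ k with hwp
  set wm : ℝ → ℝ := fun t => (max (-t) 0) ^ 4 * (1 - t ^ 2) ^ k with hwm
  have hwp_c : Continuous wp :=
    ((continuous_id.max continuous_const).pow 4).mul
      ((continuous_const.sub (continuous_pow 2)).pow k)
  have hwm_c : Continuous wm :=
    ((continuous_id.neg.max continuous_const).pow 4).mul
      ((continuous_const.sub (continuous_pow 2)).pow k)
  have hsq : ∀ t ∈ Set.Icc (-1:ℝ) 1, (0:ℝ) ≤ 1 - t ^ 2 := by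
    intro t ht; nlinarith [ht.1, ht.2]
  have hwp_pos : ∀ t ∈ Set.Ioo (0:ℝ) 1, 0 < wp t := by
    intro t ht
    have h1 : (0:ℝ) < max t 0 := lt_max_of_lt_left ht.1
    have h2 : (0:ℝ) < 1 - t ^ 2 := by nlinarith [ht.1, ht.2]
    exact mul_pos (pow_pos h1 4) (pow_pos h2 k)
  have hwm_pos : ∀ t ∈ Set.Ioo (-1:ℝ) 0, 0 < wm t := by
    intro t ht
    have h1 : (0:ℝ) < max (-t) 0 := lt_max_of_lt_left (by linarith [ht.2])
    have h2 : (0:ℝ) < 1 - t ^ 2 := by nlinarith [ht.1, ht.2]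
    exact mul_pos (pow_pos h1 4) (pow_pos h2 k)
  have hwp_nn : ∀ t ∈ Set.Icc (-1:ℝ) 1, 0 ≤ wp t := fun t ht =>
    mul_nonneg (pow_nonneg (le_max_right _ _) 4) (pow_nonneg (hsq t ht) k)
  have hwm_nn : ∀ t ∈ Set.Icc (-1:ℝ) 1, 0 ≤ wm t := fun t ht =>
    mul_nonneg (pow_nonneg (le_max_right _ _) 4) (pow_nonneg (hsq t ht) k)
  obtain ⟨c₁, hc₁, h₁⟩ := BubbleAux.key m wp hwp_c 0 1 one_pos (by norm_num) le_rfl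
    hwp_pos hwp_nn
  obtain ⟨c₂, hc₂, h₂⟩ := BubbleAux.key m wm hwm_c (-1) 0 (by norm_num) le_rfl (by norm_num)
    hwm_pos hwm_nn
  refine ⟨max c₁ c₂, lt_max_of_lt_left hc₁, fun t₀ ht₀ p hdeg => ?_⟩
  have hpc : Continuous fun t : ℝ => Polynomial.eval t p := p.continuous
  have hint_actual : IntegrableOn
      (fun t : ℝ => (t - t₀) ^ 4 * (1 - t ^ 2) ^ k * (Polynomial.eval t p) ^ 2)
      (Set.Icc (-1:ℝ) 1) := by
    exact ((((continuous_id.sub continuous_const).pow 4).mul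
      ((continuous_const.sub (continuous_pow 2)).pow k)).mul (hpc.pow 2)).integrableOn_Icc
  have hactual_nn : 0 ≤ ∫ t in Set.Icc (-1:ℝ) 1,
      (t - t₀) ^ 4 * (1 - t ^ 2) ^ k * (Polynomial.eval t p) ^ 2 := by
    refine setIntegral_nonneg measurableSet_Icc fun t ht => ?_
    exact mul_nonneg (mul_nonneg (by positivity) (pow_nonneg (hsq t ht) k)) (sq_nonneg _)
  rcases le_total t₀ 0 with ht₀0 | ht₀0
  · -- use wp
    have hptw : ∀ t ∈ Set.Icc (-1:ℝ) 1,
        wp t * (Polynomial.eval t p) ^ 2 ≤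
          (t - t₀) ^ 4 * (1 - t ^ 2) ^ k * (Polynomial.eval t p) ^ 2 := by
      intro t ht
      have hbase : (max t 0) ^ 4 ≤ (t - t₀) ^ 4 := by
        rcases le_total t 0 with htn | htn
        · rw [max_eq_right htn, show ((0:ℝ)^4 = 0) by norm_num]
          positivity
        · rw [max_eq_left htn]
          exact pow_le_pow_left₀ htn (by linarith) 4
      have := mul_le_mul_of_nonneg_right
        (mul_le_mul_of_nonneg_right hbase (pow_nonneg (hsq t ht) k)) (sq_nonneg
          (Polynomial.eval t p))
      simpa [hwp] using this
    have hmono : (∫ t in Set.Icc (-1:ℝ) 1, wp t * (Polynomial.eval t p) ^ 2) ≤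
        ∫ t in Set.Icc (-1:ℝ) 1,
          (t - t₀) ^ 4 * (1 - t ^ 2) ^ k * (Polynomial.eval t p) ^ 2 := by
      refine setIntegral_mono_on ((hwp_c.mul (hpc.pow 2)).integrableOn_Icc)
        hint_actual measurableSet_Icc hptw
    calc (∫ t in Set.Icc (-1:ℝ) 1, (Polynomial.eval t p) ^ 2)
        ≤ c₁ * ∫ t in Set.Icc (-1:ℝ) 1, wp t * (Polynomial.eval t p) ^ 2 := h₁ p hdeg
      _ ≤ c₁ * ∫ t in Set.Icc (-1:ℝ) 1,
            (t - t₀) ^ 4 * (1 - t ^ 2) ^ k * (Polynomial.eval t p) ^ 2 :=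
          mul_le_mul_of_nonneg_left hmono hc₁.le
      _ ≤ max c₁ c₂ * ∫ t in Set.Icc (-1:ℝ) 1,
            (t - t₀) ^ 4 * (1 - t ^ 2) ^ k * (Polynomial.eval t p) ^ 2 :=
          mul_le_mul_of_nonneg_right (le_max_left _ _) hactual_nn
  · -- use wm
    have hptw : ∀ t ∈ Set.Icc (-1:ℝ) 1,
        wm t * (Polynomial.eval t p) ^ 2 ≤
          (t - t₀) ^ 4 * (1 - t ^ 2) ^ k * (Polynomial.eval t p) ^ 2 := by
      intro t ht
      have hbase : (max (-t) 0) ^ 4 ≤ (t - t₀) ^ 4 := by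
        rcases le_total t 0 with htn | htn
        · rw [max_eq_left (by linarith)]
          have h4 : (t - t₀) ^ 4 = (t₀ - t) ^ 4 := by ring
          rw [h4]
          exact pow_le_pow_left₀ (by linarith) (by linarith) 4
        · rw [max_eq_right (by linarith : -t ≤ (0:ℝ)), show ((0:ℝ)^4 = 0) by norm_num]
          positivity
      have := mul_le_mul_of_nonneg_right
        (mul_le_mul_of_nonneg_right hbase (pow_nonneg (hsq t ht) k)) (sq_nonneg
          (Polynomial.eval t p))
      simpa [hwm] using this
    have hmono : (∫ t in Set.Icc (-1:ℝ) 1, wm t * (Polynomial.eval t p) ^ 2) ≤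
        ∫ t in Set.Icc (-1:ℝ) 1,
          (t - t₀) ^ 4 * (1 - t ^ 2) ^ k * (Polynomial.eval t p) ^ 2 := by
      refine setIntegral_mono_on ((hwm_c.mul (hpc.pow 2)).integrableOn_Icc)
        hint_actual measurableSet_Icc hptw
    calc (∫ t in Set.Icc (-1:ℝ) 1, (Polynomial.eval t p) ^ 2)
        ≤ c₂ * ∫ t in Set.Icc (-1:ℝ) 1, wm t * (Polynomial.eval t p) ^ 2 := h₂ p hdeg
      _ ≤ c₂ * ∫ t in Set.Icc (-1:ℝ) 1,
            (t - t₀) ^ 4 * (1 - t ^ 2) ^ k * (Polynomial.eval t p) ^ 2 :=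
          mul_le_mul_of_nonneg_left hmono hc₂.le
      _ ≤ max c₁ c₂ * ∫ t in Set.Icc (-1:ℝ) 1,
            (t - t₀) ^ 4 * (1 - t ^ 2) ^ k * (Polynomial.eval t p) ^ 2 :=
          mul_le_mul_of_nonneg_right (le_max_right _ _) hactual_nn
end
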